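/- arXiv:2206.03047 — 3 statements merged into one kernel-verified Lean document; each statement's English description precedes it below -/
import Mathlib

section
/- Let (u_n)_{n≥1} be any sequence listing every nonzero ZF-word exactly once (up to leading 0s) which is length-increasing, meaning that the length of u_n after stripping leading 0s (equivalently, the position of its leftmost digit 1) is nondecreasing in n. Then for every n ≥ 1, h(u_n, u_{n+1}) ≥ h(g_n, g_{n+1}). -/
/-- A ZF-word: a binary word (leftmost digit at the head of the list) with no two
consecutive digits `1`. -/
def ZFword (w : List Bool) : Prop :=
  w.Chain' fun a b => ¬(a = true ∧ b = true)

/-- The lists `N_n` of binary words: `N_0 = ()`, `N_1 = (1)` and, for `n ≥ 2`,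
`N_n = 10·rev(N_{n-1}') ++ 10·rev(N_{n-2})`, where `L'` removes the leftmost letter
of each word of `L`, `rev` reverses the order of the list and `10·L` prefixes `10`
to each word of `L`. -/
def Nlist : ℕ → List (List Bool)
  | 0 => []
  | 1 => [[true]]
  | (n + 2) =>
      ((Nlist (n + 1)).map List.tail).reverse.map (fun w => true :: false :: w) ++
        (Nlist n).reverse.map (fun w => true :: false :: w)

/-- The `i`-th term `g_i` (for `i ≥ 1`) of the infinite list
`G = N_1 ++ N_2 ++ N_3 ++ ⋯`; the block `N_n` occupies the (1-indexed) positions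
`F (n+1), …, F (n+2) - 1` of `G`. -/
def Gword (i : ℕ) : List Bool :=
  (((List.range (i + 2)).map Nlist).flatten).getD (i - 1) []

/-- The Hamming distance of two binary words (leftmost digit at the head), the shorter
word being padded with leading `0`s: the number of positions (counted from the right)
at which the two words differ. -/
def hammingWords (w w' : List Bool) : ℕ :=
  ((Finset.range (max w.length w'.length)).filter
    (fun i => w.reverse.getD i false ≠ w'.reverse.getD i false)).card

/-!
Induction on `n` shows that `N_n` lists, without repetition, exactly the `F_n` ZF-words of length
`n` with leading digit `1`, that consecutive words of `N_n` differ in one digit, and that the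
first word of `N_{k+1}` is `10t` when the last word of `N_k` is `1t`. So `h(g_n, g_{n+1})` is
`1` inside a block and at most `2` at a block boundary `n + 1 = F_{k+2}`.

There are `F_{k+2} - 1` nonzero ZF-words of length at most `k`, so a length-increasing listing
puts the words of length `k` exactly at the positions `F_{k+1}, …, F_{k+2} - 1`, as `G` does.
Inside a block, `u_n ≠ u_{n+1}` gives distance at least `1`. At a boundary, with leading zeros
stripped, `u_{n+1} = 1v` with `v` as long as `u_n`, and `v ≠ u_n` since `v` cannot start with
`1`; so the words differ in the top digit and somewhere in `v`.
-/

def digit (w : List Bool) (i : ℕ) : Bool := w.reverse.getD i false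

lemma digit_of_length_le {w : List Bool} {i : ℕ} (h : w.length ≤ i) : digit w i = false :=
  List.getD_eq_default _ _ (by simpa using h)

lemma digit_cons (a : Bool) (w : List Bool) (i : ℕ) :
    digit (a :: w) i = if i = w.length then a else digit w i := by
  unfold digit
  rw [List.reverse_cons]
  rcases lt_trichotomy i w.length with h | rfl | h
  · rw [List.getD_append _ _ _ _ (by simpa using h), if_neg h.ne]
  · simp
  · rw [if_neg h.ne', List.getD_eq_default _ _ (by simp; omega),
      List.getD_eq_default _ _ (by simpa using h.le)]

lemma digit_false_cons (w : List Bool) : digit (false :: w) = digit w := by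
  funext i
  rw [digit_cons]
  split_ifs with h
  · exact (digit_of_length_le h.ge).symm
  · rfl

lemma digit_dropWhile_not (w : List Bool) : digit (w.dropWhile (!·)) = digit w := by
  induction w with
  | nil => rfl
  | cons a w ih => cases a <;> simp [ih, digit_false_cons]

lemma hammingWords_eq_card_filter {w w' : List Bool} {M : ℕ} (hw : w.length ≤ M)
    (hw' : w'.length ≤ M) :
    hammingWords w w' = ((Finset.range M).filter fun i => digit w i ≠ digit w' i).card := by
  unfold hammingWords
  congr 1
  ext i
  simp only [Finset.mem_filter, Finset.mem_range]
  refine ⟨fun h => ⟨by omega, h.2⟩, fun h => ⟨?_, h.2⟩⟩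
  by_contra hi
  exact h.2 ((digit_of_length_le (by omega)).trans (digit_of_length_le (by omega)).symm)

lemma hammingWords_congr {v v' w w' : List Bool} (h : digit v = digit w)
    (h' : digit v' = digit w') : hammingWords v v' = hammingWords w w' := by
  set M := max (max v.length v'.length) (max w.length w'.length)
  rw [hammingWords_eq_card_filter (M := M) (by omega) (by omega),
    hammingWords_eq_card_filter (M := M) (by omega) (by omega), h, h']

lemma hammingWords_comm (w w' : List Bool) : hammingWords w w' = hammingWords w' w := by
  simp only [hammingWords, max_comm w.length, ne_comm]

lemma hammingWords_self (w : List Bool) : hammingWords w w = 0 := by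
  simp [hammingWords]

lemma hammingWords_cons_cons (a b : Bool) {w w' : List Bool} (h : w.length = w'.length) :
    hammingWords (a :: w) (b :: w') = (if a = b then 0 else 1) + hammingWords w w' := by
  rw [hammingWords_eq_card_filter (M := w.length + 1) (by simp) (by simp [h]),
    hammingWords_eq_card_filter (M := w.length) le_rfl h.ge, Finset.card_filter,
    Finset.card_filter, Finset.sum_range_succ, add_comm]
  congr 1
  · simp [digit_cons, h]
  · refine Finset.sum_congr rfl fun i hi => ?_
    have hi : i ≠ w.length := (Finset.mem_range.1 hi).ne
    simp [digit_cons, hi, ← h]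

lemma hammingWords_cons_self (a : Bool) {w w' : List Bool} (h : w.length = w'.length) :
    hammingWords (a :: w) (a :: w') = hammingWords w w' := by
  simp [hammingWords_cons_cons a a h]

lemma hammingWords_pos_of_ne {w w' : List Bool} (hlen : w.length = w'.length) (hne : w ≠ w') :
    0 < hammingWords w w' := by
  induction w generalizing w' with
  | nil => exact absurd (List.length_eq_zero_iff.1 hlen.symm).symm hne
  | cons a w ih =>
    obtain ⟨b, w', rfl⟩ := List.exists_cons_of_length_eq_add_one hlen.symm
    rw [hammingWords_cons_cons a b (by simpa using hlen)]
    by_cases hab : a = b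
    · subst hab
      simpa using ih (by simpa using hlen) (by simpa using hne)
    · simp [hab]

lemma hammingWords_le_two (a b c : Bool) (t : List Bool) :
    hammingWords (a :: t) (b :: c :: t) ≤ 2 := by
  rw [hammingWords_congr (digit_false_cons (a :: t)).symm rfl,
    hammingWords_cons_cons _ _ (by simp), hammingWords_cons_cons _ _ rfl, hammingWords_self]
  split_ifs <;> simp

lemma ZFword_iff_isChain {w : List Bool} :
    ZFword w ↔ w.IsChain fun a b => ¬(a = true ∧ b = true) := Iff.rfl

lemma ZFword_false_cons_iff {w : List Bool} : ZFword (false :: w) ↔ ZFword w := by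
  simp [ZFword_iff_isChain, List.isChain_cons]

lemma ZFword_true_cons_iff {w : List Bool} :
    ZFword (true :: w) ↔ ZFword w ∧ w.head? ≠ some true := by
  simp [ZFword_iff_isChain, List.isChain_cons, and_comm]

lemma two_le_hammingWords_of_length_eq_succ {w w' : List Bool} (hw : w.head? = some true)
    (hw' : ZFword w') (hhead' : w'.head? = some true) (hlen : w'.length = w.length + 1) :
    2 ≤ hammingWords w w' := by
  obtain ⟨v, rfl⟩ : ∃ v, w' = true :: v := ⟨_, List.eq_cons_of_mem_head? hhead'⟩
  have hvw : v.length = w.length := by simpa using hlen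
  have hne : w ≠ v := fun h => (ZFword_true_cons_iff.1 hw').2 (h ▸ hw)
  rw [hammingWords_congr (digit_false_cons w).symm rfl,
    hammingWords_cons_cons _ _ hvw.symm]
  have := hammingWords_pos_of_ne hvw.symm hne
  simp only [Bool.false_eq_true, ↓reduceIte]
  omega

lemma mem_Nlist_iff : ∀ (n : ℕ) (w : List Bool),
    w ∈ Nlist n ↔ ZFword w ∧ w.length = n ∧ w.head? = some true
  | 0, w => by cases w <;> simp [Nlist]
  | 1, w => by
    rcases w with _ | ⟨a, _ | ⟨b, w⟩⟩ <;> simp [Nlist, ZFword_iff_isChain]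
  | n + 2, w => by
    have tails : ∀ v, (true :: v ∈ Nlist (n + 1) ∨ v ∈ Nlist n) ↔ ZFword v ∧ v.length = n := by
      intro v
      rw [mem_Nlist_iff (n + 1), mem_Nlist_iff n, ZFword_true_cons_iff]
      by_cases hv : v.head? = some true <;> simp [hv]
    have heads : ∀ x ∈ Nlist (n + 1), x = true :: x.tail := fun x hx =>
      List.eq_cons_of_mem_head? ((mem_Nlist_iff _ x).1 hx).2.2
    calc w ∈ Nlist (n + 2)
        ↔ ∃ v, (true :: v ∈ Nlist (n + 1) ∨ v ∈ Nlist n) ∧ true :: false :: v = w := by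
          simp only [Nlist, List.mem_append, List.mem_map, List.mem_reverse]
          constructor
          · rintro (⟨-, ⟨x, hx, rfl⟩, rfl⟩ | ⟨v, hv, rfl⟩)
            · exact ⟨x.tail, .inl (heads x hx ▸ hx), rfl⟩
            · exact ⟨v, .inr hv, rfl⟩
          · rintro ⟨v, hv | hv, rfl⟩
            · exact .inl ⟨v, ⟨true :: v, hv, rfl⟩, rfl⟩
            · exact .inr ⟨v, hv, rfl⟩
      _ ↔ ZFword w ∧ w.length = n + 2 ∧ w.head? = some true := by
          simp only [tails]
          constructor
          · rintro ⟨v, ⟨hv, rfl⟩, rfl⟩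
            simp [ZFword_true_cons_iff, ZFword_false_cons_iff, hv]
          · rintro ⟨hw, hlen, hhead⟩
            obtain ⟨a, b, v, rfl⟩ : ∃ a b v, w = a :: b :: v := by
              rcases w with _ | ⟨a, _ | ⟨b, v⟩⟩ <;> simp_all
            simp only [List.length_cons, Nat.add_right_cancel_iff, List.head?_cons,
              Option.some.injEq] at hlen hhead
            subst hhead
            obtain ⟨hbv, hb⟩ := ZFword_true_cons_iff.1 hw
            cases b
            · exact ⟨v, ⟨ZFword_false_cons_iff.1 hbv, hlen⟩, rfl⟩
            · simp at hb

lemma length_of_mem_Nlist {n : ℕ} {x : List Bool} (hx : x ∈ Nlist n) : x.length = n :=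
  ((mem_Nlist_iff n x).1 hx).2.1

lemma eq_true_cons_tail_of_mem_Nlist {n : ℕ} {x : List Bool} (hx : x ∈ Nlist n) :
    x = true :: x.tail :=
  List.eq_cons_of_mem_head? ((mem_Nlist_iff n x).1 hx).2.2

lemma length_Nlist : ∀ n, (Nlist n).length = Nat.fib n
  | 0 => rfl
  | 1 => rfl
  | n + 2 => by
    simp only [Nlist, List.length_append, List.length_map, List.length_reverse,
      length_Nlist (n + 1), length_Nlist n, Nat.fib_add_two, add_comm]

lemma nodup_Nlist : ∀ n, (Nlist n).Nodup
  | 0 => List.nodup_nil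
  | 1 => List.nodup_singleton _
  | n + 2 => by
    have hcons : (fun w : List Bool => true :: false :: w).Injective := fun _ _ h => by
      simpa using h
    refine List.Nodup.append ?_ ?_ ?_
    · refine (List.nodup_reverse.2 ((nodup_Nlist (n + 1)).map_on ?_)).map hcons
      intro x hx y hy hxy
      rw [eq_true_cons_tail_of_mem_Nlist hx, eq_true_cons_tail_of_mem_Nlist hy, hxy]
    · exact (List.nodup_reverse.2 (nodup_Nlist n)).map hcons
    · simp only [List.Disjoint, List.mem_map, List.mem_reverse]
      rintro _ ⟨-, ⟨x, hx, rfl⟩, rfl⟩ ⟨v, hv, hvx⟩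
      have hxZF := ((mem_Nlist_iff _ x).1 hx).1
      rw [eq_true_cons_tail_of_mem_Nlist hx, ZFword_true_cons_iff] at hxZF
      obtain rfl : v = x.tail := by simpa using hvx
      exact hxZF.2 ((mem_Nlist_iff n _).1 hv).2.2

lemma Nlist_ne_nil {n : ℕ} (hn : 1 ≤ n) : Nlist n ≠ [] := by
  rw [← List.length_pos_iff, length_Nlist]
  exact Nat.fib_pos.2 hn

lemma head?_Nlist_succ {n : ℕ} (hn : 1 ≤ n) :
    (Nlist (n + 1)).head? = (Nlist n).getLast?.map fun w => true :: false :: w.tail := by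
  obtain ⟨m, rfl⟩ := Nat.exists_eq_add_of_le' hn
  simp [Nlist, List.head?_append, List.head?_reverse, List.getLast?_map,
    List.getLast?_eq_some_getLast (Nlist_ne_nil hn)]

lemma isChain_hammingWords_Nlist : ∀ n, (Nlist n).IsChain fun a b => hammingWords a b = 1
  | 0 => List.isChain_nil
  | 1 => List.isChain_singleton _
  | n + 2 => by
    have ten : ∀ {a b : List Bool}, a.length = b.length →
        hammingWords (true :: false :: a) (true :: false :: b) = hammingWords a b :=
      fun h => by rw [hammingWords_cons_self _ (by simpa using h), hammingWords_cons_self _ h]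
    refine List.IsChain.append ?_ ?_ ?_
    · rw [List.isChain_map, List.isChain_reverse, List.isChain_map]
      refine (isChain_hammingWords_Nlist (n + 1)).imp_of_mem_imp fun a b ha hb hab => ?_
      have hlen : a.tail.length = b.tail.length := by
        simp [length_of_mem_Nlist ha, length_of_mem_Nlist hb]
      rw [ten hlen.symm, hammingWords_comm, ← hammingWords_cons_self true hlen,
        ← eq_true_cons_tail_of_mem_Nlist ha, ← eq_true_cons_tail_of_mem_Nlist hb, hab]
    · rw [List.isChain_map, List.isChain_reverse]
      refine (isChain_hammingWords_Nlist n).imp_of_mem_imp fun a b ha hb hab => ?_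
      rw [ten (by rw [length_of_mem_Nlist ha, length_of_mem_Nlist hb]), hammingWords_comm, hab]
    · rcases Nat.eq_zero_or_pos n with rfl | hn
      · simp [Nlist]
      simp only [List.getLast?_map, List.getLast?_reverse, List.head?_map, List.head?_reverse,
        head?_Nlist_succ hn, Option.map_map, Option.mem_def, Option.map_eq_some_iff]
      -- the two halves meet at `100t` and `101t`, where `1t` is the last word of `N_n`
      rintro _ ⟨w, hw, rfl⟩ _ ⟨w', hw', rfl⟩
      obtain rfl : w' = w := Option.some_inj.1 (hw'.symm.trans hw)
      rw [eq_true_cons_tail_of_mem_Nlist (List.mem_of_getLast? hw)]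
      simp [ten, hammingWords_cons_cons, hammingWords_self]

def blocks (m : ℕ) : List (List Bool) := ((List.range m).map Nlist).flatten

lemma blocks_succ (m : ℕ) : blocks (m + 1) = blocks m ++ Nlist m := by
  simp [blocks, List.range_succ]

lemma length_blocks (m : ℕ) : (blocks m).length = Nat.fib (m + 1) - 1 := by
  induction m with
  | zero => rfl
  | succ m ih =>
    have := Nat.fib_pos.2 (by omega : 0 < m + 1)
    rw [blocks_succ, List.length_append, ih, length_Nlist, Nat.fib_add_two]
    omega

lemma blocks_prefix_blocks {m m' : ℕ} (h : m ≤ m') : blocks m <+: blocks m' := by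
  induction m', h using Nat.le_induction with
  | base => exact List.prefix_refl _
  | succ m' _ ih => exact ih.trans (blocks_succ m' ▸ List.prefix_append _ _)

lemma mem_blocks_iff {m : ℕ} {w : List Bool} :
    w ∈ blocks m ↔ ZFword w ∧ w.length < m ∧ w.head? = some true := by
  simp only [blocks, List.mem_flatten, List.mem_map, List.mem_range]
  constructor
  · rintro ⟨_, ⟨j, hj, rfl⟩, hw⟩
    obtain ⟨hZF, rfl, hhead⟩ := (mem_Nlist_iff _ w).1 hw
    exact ⟨hZF, hj, hhead⟩
  · rintro ⟨hZF, hlen, hhead⟩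
    exact ⟨_, ⟨w.length, hlen, rfl⟩, (mem_Nlist_iff _ w).2 ⟨hZF, rfl, hhead⟩⟩

lemma nodup_blocks (m : ℕ) : (blocks m).Nodup := by
  induction m with
  | zero => exact List.nodup_nil
  | succ m ih =>
    rw [blocks_succ]
    refine ih.append (nodup_Nlist m) fun w hw hw' => ?_
    exact (mem_blocks_iff.1 hw).2.1.ne (length_of_mem_Nlist hw')

lemma Gword_eq_getD_Nlist {k n : ℕ} (h₁ : Nat.fib (k + 1) ≤ n) (h₂ : n < Nat.fib (k + 2)) :
    Gword n = (Nlist k).getD (n - Nat.fib (k + 1)) [] := by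
  have hk : k + 1 ≤ n + 2 := by have := Nat.le_fib_add_one (k + 1); omega
  have hF := Nat.fib_pos.2 (by omega : 0 < k + 1)
  have hi : n - 1 < (blocks (k + 1)).length := by
    rw [length_blocks, show k + 1 + 1 = k + 2 from rfl]; omega
  have hpre := blocks_prefix_blocks hk
  rw [show Gword n = (blocks (n + 2)).getD (n - 1) [] from rfl,
    List.getD_eq_getElem _ _ (hi.trans_le hpre.length_le), ← hpre.getElem hi,
    ← List.getD_eq_getElem _ [] hi, blocks_succ,
    List.getD_append_right _ _ _ _ (by rw [length_blocks]; omega), length_blocks]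
  congr 1
  omega

lemma exists_fib_le_lt_fib {n : ℕ} (hn : 1 ≤ n) :
    ∃ k, 1 ≤ k ∧ Nat.fib (k + 1) ≤ n ∧ n < Nat.fib (k + 2) := by
  have h2 : 2 ≤ Nat.greatestFib n := Nat.le_greatestFib.2 hn
  refine ⟨Nat.greatestFib n - 1, by omega, ?_, ?_⟩
  · rw [Nat.sub_add_cancel (by omega)]
    exact Nat.fib_greatestFib_le n
  · rw [show Nat.greatestFib n - 1 + 2 = Nat.greatestFib n + 1 by omega]
    exact Nat.lt_fib_greatestFib_add_one n

lemma hammingWords_Gword_eq_one_of_succ_lt {k n : ℕ} (h₁ : Nat.fib (k + 1) ≤ n)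
    (h₂ : n + 1 < Nat.fib (k + 2)) : hammingWords (Gword n) (Gword (n + 1)) = 1 := by
  have hi : n - Nat.fib (k + 1) + 1 < (Nlist k).length := by
    rw [length_Nlist]; have := @Nat.fib_add_two k; omega
  rw [Gword_eq_getD_Nlist h₁ (by omega), Gword_eq_getD_Nlist (by omega) h₂,
    Nat.sub_add_comm h₁, List.getD_eq_getElem _ _ (by omega), List.getD_eq_getElem _ _ hi]
  exact List.isChain_iff_getElem.1 (isChain_hammingWords_Nlist k) _ hi

lemma hammingWords_Gword_le_two_of_succ_eq_fib {k n : ℕ} (hk : 1 ≤ k)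
    (hn : n + 1 = Nat.fib (k + 2)) : hammingWords (Gword n) (Gword (n + 1)) ≤ 2 := by
  have := @Nat.fib_add_two k
  have := Nat.fib_pos.2 hk
  have hlast : Gword n = ((Nlist k).getLast?).getD [] := by
    rw [Gword_eq_getD_Nlist (k := k) (by omega) (by omega), List.getD_eq_getElem?_getD,
      List.getLast?_eq_getElem?, length_Nlist]
    congr 2
    omega
  have hfirst : Gword (n + 1) = ((Nlist (k + 1)).head?).getD [] := by
    rw [Gword_eq_getD_Nlist (k := k + 1) hn.ge (hn ▸ Nat.fib_lt_fib_succ (by omega)),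
      List.getD_eq_getElem?_getD, List.head?_eq_getElem?, hn, show k + 1 + 1 = k + 2 from rfl,
      Nat.sub_self]
  obtain ⟨w, hw⟩ : ∃ w, (Nlist k).getLast? = some w :=
    ⟨_, List.getLast?_eq_some_getLast (Nlist_ne_nil hk)⟩
  rw [hlast, hfirst, head?_Nlist_succ hk, hw,
    eq_true_cons_tail_of_mem_Nlist (List.mem_of_getLast? hw)]
  exact hammingWords_le_two _ _ _ _

lemma setOf_ZFword_length_le_eq (k : ℕ) :
    {w : List Bool | ZFword w ∧ w.length ≤ k ∧ w.head? = some true} =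
      ↑(blocks (k + 1)).toFinset := by
  ext w
  simp [mem_blocks_iff]

lemma ncard_setOf_ZFword_length_le (k : ℕ) :
    {w : List Bool | ZFword w ∧ w.length ≤ k ∧ w.head? = some true}.ncard =
      Nat.fib (k + 2) - 1 := by
  rw [setOf_ZFword_length_le_eq, Set.ncard_coe_finset,
    List.toFinset_card_of_nodup (nodup_blocks _), length_blocks]

lemma setOf_le_eq_Icc_one_ncard {α : Type*} [Preorder α] {f : ℕ → α}
    (hf : MonotoneOn f (Set.Ici 1)) {a : α} (hfin : {m | 1 ≤ m ∧ f m ≤ a}.Finite) :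
    {m | 1 ≤ m ∧ f m ≤ a} = Set.Icc 1 {m | 1 ≤ m ∧ f m ≤ a}.ncard := by
  set S := {m | 1 ≤ m ∧ f m ≤ a}
  have hdown : ∀ {m b}, 1 ≤ m → m ≤ b → b ∈ S → m ∈ S := fun hm hmb hb =>
    ⟨hm, (hf (Set.mem_Ici.2 hm) (Set.mem_Ici.2 hb.1) hmb).trans hb.2⟩
  ext m
  constructor
  · intro hm
    have hsub : Set.Icc 1 m ⊆ S := fun b hb => hdown hb.1 hb.2 hm
    have := Set.ncard_le_ncard hsub hfin
    simp only [Set.ncard_Icc_nat] at this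
    exact ⟨hm.1, by omega⟩
  · rintro ⟨h1, h2⟩
    by_contra hm
    have hsub : S ⊆ Set.Icc 1 (m - 1) := fun b hb =>
      ⟨hb.1, by by_contra; exact hm (hdown h1 (by omega) hb)⟩
    have := Set.ncard_le_ncard hsub (Set.finite_Icc _ _)
    simp only [Set.ncard_Icc_nat] at this
    omega

lemma ZFword_dropWhile_not {w : List Bool} (h : ZFword w) : ZFword (w.dropWhile (!·)) :=
  List.IsChain.suffix h (List.dropWhile_suffix _)

lemma head?_dropWhile_not {w : List Bool} (h : true ∈ w) :
    (w.dropWhile (!·)).head? = some true := by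
  induction w with
  | nil => simp at h
  | cons a w ih => cases a <;> simp_all

structure IsZFListing (u : ℕ → List Bool) : Prop where
  zfword_mem : ∀ n, 1 ≤ n → ZFword (u n) ∧ true ∈ u n
  existsUnique : ∀ w : List Bool, ZFword w → w.head? = some true →
    ∃! n : ℕ, 1 ≤ n ∧ (u n).dropWhile (fun b => !b) = w

namespace IsZFListing

variable {u : ℕ → List Bool}

lemma injOn_dropWhile (hu : IsZFListing u) :
    Set.InjOn (fun m => (u m).dropWhile (!·)) (Set.Ici 1) := fun a ha _ hb hab =>
  (hu.existsUnique _ (ZFword_dropWhile_not (hu.zfword_mem a ha).1)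
    (head?_dropWhile_not (hu.zfword_mem a ha).2)).unique ⟨ha, rfl⟩ ⟨hb, hab.symm⟩

lemma length_dropWhile_le_iff (hu : IsZFListing u)
    (hmono : MonotoneOn (fun m => ((u m).dropWhile (!·)).length) (Set.Ici 1))
    {k m : ℕ} (hm : 1 ≤ m) :
    ((u m).dropWhile (!·)).length ≤ k ↔ m ≤ Nat.fib (k + 2) - 1 := by
  set S := {m | 1 ≤ m ∧ ((u m).dropWhile (!·)).length ≤ k}
  have hinj := hu.injOn_dropWhile.mono fun m (hm : m ∈ S) => Set.mem_Ici.2 hm.1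
  have himage : (fun m => (u m).dropWhile (!·)) '' S =
      {w : List Bool | ZFword w ∧ w.length ≤ k ∧ w.head? = some true} := by
    ext w
    constructor
    · rintro ⟨m, ⟨hm, hlen⟩, rfl⟩
      exact ⟨ZFword_dropWhile_not (hu.zfword_mem m hm).1, hlen,
        head?_dropWhile_not (hu.zfword_mem m hm).2⟩
    · rintro ⟨hw, hlen, hhead⟩
      obtain ⟨m, ⟨hm, rfl⟩, -⟩ := hu.existsUnique w hw hhead
      exact ⟨m, ⟨hm, hlen⟩, rfl⟩
  have hfin : S.Finite := Set.Finite.of_finite_image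
    (himage ▸ setOf_ZFword_length_le_eq k ▸ Finset.finite_toSet _) hinj
  have hS := setOf_le_eq_Icc_one_ncard hmono hfin
  rw [← hinj.ncard_image, himage, ncard_setOf_ZFword_length_le] at hS
  simpa [S, hm] using Set.ext_iff.1 hS m

lemma length_dropWhile_eq_of_fib_le_of_lt (hu : IsZFListing u)
    (hmono : MonotoneOn (fun m => ((u m).dropWhile (!·)).length) (Set.Ici 1))
    {k m : ℕ} (h₁ : Nat.fib (k + 1) ≤ m) (h₂ : m < Nat.fib (k + 2)) :
    ((u m).dropWhile (!·)).length = k := by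
  obtain _ | j := k
  · exact absurd (h₁.trans_lt h₂) (by simp)
  rw [show j + 1 + 1 = j + 2 from rfl] at h₁
  have hm : 1 ≤ m := (Nat.fib_pos.2 (by omega)).trans_le h₁
  have hle := (hu.length_dropWhile_le_iff hmono (k := j + 1) hm).2 (by omega)
  have hgt := (hu.length_dropWhile_le_iff hmono (k := j) hm).not.2 (by omega)
  omega

end IsZFListing

/-- Let `(u_n)_{n ≥ 1}` be any sequence listing every nonzero ZF-word
exactly once (up to leading `0`s, stripped by `List.dropWhile (!·)`) which is
length-increasing (the length after stripping leading `0`s is nondecreasing).  Then for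
every `n ≥ 1`, `h(u_n, u_{n+1}) ≥ h(g_n, g_{n+1})`. -/
theorem grayCode_hamming_minimal (u : ℕ → List Bool)
    (hZF : ∀ n, 1 ≤ n → ZFword (u n) ∧ true ∈ u n)
    (huniq : ∀ w : List Bool, ZFword w → w.head? = some true →
      ∃! n : ℕ, 1 ≤ n ∧ (u n).dropWhile (fun b => !b) = w)
    (hmono : ∀ n, 1 ≤ n →
      ((u n).dropWhile (fun b => !b)).length ≤ ((u (n + 1)).dropWhile (fun b => !b)).length)
    (n : ℕ) (hn : 1 ≤ n) :
    hammingWords (Gword n) (Gword (n + 1)) ≤ hammingWords (u n) (u (n + 1)) := by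
  have hu : IsZFListing u := ⟨hZF, huniq⟩
  have hlen {k m : ℕ} (h₁ : Nat.fib (k + 1) ≤ m) (h₂ : m < Nat.fib (k + 2)) :=
    hu.length_dropWhile_eq_of_fib_le_of_lt (monotoneOn_nat_Ici_of_le_succ hmono) h₁ h₂
  obtain ⟨k, hk, h₁, h₂⟩ := exists_fib_le_lt_fib hn
  rw [← hammingWords_congr (digit_dropWhile_not (u n)) (digit_dropWhile_not (u (n + 1)))]
  rcases Nat.lt_or_ge (n + 1) (Nat.fib (k + 2)) with hin | hout
  · have hne : (u n).dropWhile (!·) ≠ (u (n + 1)).dropWhile (!·) := fun h => by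
      have := hu.injOn_dropWhile (Set.mem_Ici.2 hn) (Set.mem_Ici.2 (by omega)) h
      omega
    rw [hammingWords_Gword_eq_one_of_succ_lt h₁ hin]
    exact hammingWords_pos_of_ne (by rw [hlen h₁ h₂, hlen (by omega) hin]) hne
  · have hedge : n + 1 = Nat.fib (k + 2) := by omega
    refine (hammingWords_Gword_le_two_of_succ_eq_fib hk hedge).trans
      (two_le_hammingWords_of_length_eq_succ (head?_dropWhile_not (hZF n hn).2)
        (ZFword_dropWhile_not (hZF _ (by omega)).1) (head?_dropWhile_not (hZF _ (by omega)).2) ?_)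
    rw [hlen h₁ h₂, hlen hedge.ge (hedge ▸ Nat.fib_lt_fib_succ (by omega))]
end

section
/- Let σ be the Fibonacci substitution on the alphabet {α, β}, σ(α) = αβ, σ(β) = α, and let σ_0σ_1σ_2⋯ = σ^∞(α) be its fixed point (indexed from 0). Define τ_1 = 1 and, for n ≥ 2, τ_n = 1 if σ_{⌊n/2⌋−1} = β and τ_n = 0 otherwise. For every n ≥ 2, let (h_{F_{n+2}}, …, h_{F_{n+3}−1}) be the list obtained from N_n = (g_{F_{n+1}}, …, g_{F_{n+2}−1}) by keeping each word ending in 1 once and repeating each word ending in 0 twice consecutively (this list indeed has F_{n+1} entries). Then g_i = h_i τ_i (the word h_i with the digit τ_i appended at its right end) for every F_{n+2} ≤ i ≤ F_{n+3} − 1; that is, this procedure produces N_{n+1} from N_n. -/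
/-- The Fibonacci substitution `σ(α) = αβ`, `σ(β) = α` on words over `{α, β}`, with
`α = false` and `β = true`. -/
def fibSub : List Bool → List Bool
  | [] => []
  | a :: t => (if a then [false] else [false, true]) ++ fibSub t

/-- The `k`-th letter (indexed from `0`) of the fixed point `σ^∞(α)` of the Fibonacci
substitution: `true` codes `β`, `false` codes `α`.  (The word `σ^[k+1](α)` has length
`F (k+3) > k`, and these words are prefixes of each other.) -/
def fibFixedPoint (k : ℕ) : Bool :=
  (fibSub^[k + 1] [false]).getD k false

/-- The digit `τ_i`: `τ_1 = 1` and, for `i ≥ 2`, `τ_i = 1` iff `σ_{⌊i/2⌋ - 1} = β`. -/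
def tauDigit (i : ℕ) : Bool :=
  if i ≤ 1 then true else fibFixedPoint (i / 2 - 1)

/-- The duplication procedure: each word of `L` ending in `1` is kept once, each word
ending in `0` is repeated twice consecutively. -/
def dupList (L : List (List Bool)) : List (List Bool) :=
  L.flatMap fun w => if w.getLast? = some true then [w] else [w, w]

/-! Deleting the last digit of every word of `N_{n+1}` yields `N_n` with the words ending in `0`
doubled: both sides obey the recursion defining `N`, since the duplication commutes with
concatenation, with reversal, and with maps preserving last digits. It remains to find the last
digits of `N_{n+1}`. By the same recursion, the word at position `i` of `G` in the block `N_k`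
(`k ≥ 3`) has the last digit of the word at position `2 F_{k+1} - 1 - i`, so everything reduces
to the symmetry `τ_i = τ_{2 F_m - 1 - i}`. That is the classical fact that the Fibonacci word
`σ^m(α)` with its last two letters removed is a palindrome. -/

lemma reverse_map_range' {α : Type*} (f : ℕ → α) {a a' b : ℕ}
    (h : ∀ k < b, f (a + b - 1 - k) = f (a' + k)) :
    ((List.range' a b).map f).reverse = (List.range' a' b).map f := by
  rw [← List.map_reverse, List.reverse_range', List.range'_eq_map_range, List.map_map,
    List.map_map]
  exact List.map_congr_left fun k hk => h k (List.mem_range.1 hk)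

lemma getLast?_cons_cons_of_ne_nil {α : Type*} (a b : α) {w : List α} (hw : w ≠ []) :
    (a :: b :: w).getLast? = w.getLast? :=
  List.getLast?_append_of_ne_nil [a, b] hw

lemma dropLast_cons_cons_of_ne_nil {α : Type*} (a b : α) {w : List α} (hw : w ≠ []) :
    (a :: b :: w).dropLast = a :: b :: w.dropLast := by
  rw [List.dropLast_cons_of_ne_nil (List.cons_ne_nil _ _), List.dropLast_cons_of_ne_nil hw]

def fibWord (m : ℕ) : List Bool := fibSub^[m] [false]

lemma fibSub_append (u v : List Bool) : fibSub (u ++ v) = fibSub u ++ fibSub v := by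
  induction u with
  | nil => rfl
  | cons a t ih => simp [fibSub, ih]

lemma fibSub_iterate_append (k : ℕ) (u v : List Bool) :
    fibSub^[k] (u ++ v) = fibSub^[k] u ++ fibSub^[k] v := by
  induction k generalizing u v with
  | zero => rfl
  | succ k ih => simp only [Function.iterate_succ_apply, fibSub_append, ih]

lemma fibWord_add_two (m : ℕ) : fibWord (m + 2) = fibWord (m + 1) ++ fibWord m :=
  fibSub_iterate_append (m + 1) [false] [true]

lemma length_fibWord : ∀ m, (fibWord m).length = Nat.fib (m + 2)
  | 0 => rfl
  | 1 => rfl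
  | m + 2 => by
    rw [fibWord_add_two, List.length_append, length_fibWord (m + 1), length_fibWord m,
      Nat.fib_add_two (n := m + 2), add_comm]

lemma fibWord_prefix_succ : ∀ m, fibWord m <+: fibWord (m + 1)
  | 0 => ⟨[true], rfl⟩
  | m + 1 => fibWord_add_two m ▸ List.prefix_append _ _

lemma fibWord_prefix_of_le {m m' : ℕ} (h : m ≤ m') : fibWord m <+: fibWord m' := by
  induction h with
  | refl => exact List.prefix_refl _
  | step _ ih => exact ih.trans (fibWord_prefix_succ _)

lemma getElem?_fibWord_of_le {m m' k : ℕ} (h : m ≤ m') (hk : k < Nat.fib (m + 2)) :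
    (fibWord m')[k]? = (fibWord m)[k]? := by
  obtain ⟨t, ht⟩ := fibWord_prefix_of_le h
  rw [← ht, List.getElem?_append_left (by rwa [length_fibWord])]

lemma fibFixedPoint_eq_getElem?_fibWord {m k : ℕ} (hk : k < Nat.fib (m + 2)) :
    fibFixedPoint k = ((fibWord m)[k]?).getD false := by
  have hk' : k < Nat.fib (k + 3) := by have := Nat.le_fib_add_one (k + 3); omega
  rw [fibFixedPoint, List.getD_eq_getElem?_getD]
  rcases le_total m (k + 1) with h | h
  · exact congrArg (Option.getD · false) (getElem?_fibWord_of_le h hk)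
  · exact congrArg (Option.getD · false) (getElem?_fibWord_of_le h hk').symm

def fibWordEnding (m : ℕ) : List Bool := if Even m then [true, false] else [false, true]

def fibPalindrome : ℕ → List Bool
  | 0 => [false]
  | 1 => [false, true, false]
  | m + 2 => fibWord (m + 3) ++ fibPalindrome m

lemma reverse_fibWordEnding (m : ℕ) : (fibWordEnding (m + 1)).reverse = fibWordEnding m := by
  by_cases hm : Even m <;> simp [fibWordEnding, hm, Nat.even_add_one]

lemma fibWord_eq_fibPalindrome_append :
    ∀ m, fibWord (m + 2) = fibPalindrome m ++ fibWordEnding m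
  | 0 => by decide
  | 1 => by decide
  | m + 2 => by
    rw [fibWord_add_two, fibWord_eq_fibPalindrome_append m, fibPalindrome, List.append_assoc]
    simp [fibWordEnding, Nat.even_add]

lemma fibWord_append_fibPalindrome_comm :
    ∀ m, fibWord (m + 3) ++ fibPalindrome m = fibWord (m + 2) ++ fibPalindrome (m + 1)
  | 0 => by decide
  | m + 1 => by
    rw [fibWord_add_two (m + 2), List.append_assoc, ← fibWord_append_fibPalindrome_comm m,
      fibPalindrome]

lemma reverse_fibPalindrome : ∀ m, (fibPalindrome m).reverse = fibPalindrome m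
  | 0 => rfl
  | 1 => rfl
  | m + 2 => calc
    (fibPalindrome (m + 2)).reverse
        = (fibPalindrome (m + 1) ++ fibWordEnding (m + 1) ++ fibPalindrome m).reverse := by
      rw [fibPalindrome, fibWord_eq_fibPalindrome_append (m + 1)]
    _ = fibPalindrome m ++ fibWordEnding m ++ fibPalindrome (m + 1) := by
      simp [reverse_fibPalindrome m, reverse_fibPalindrome (m + 1), reverse_fibWordEnding]
    _ = fibPalindrome (m + 2) := by
      rw [← fibWord_eq_fibPalindrome_append, ← fibWord_append_fibPalindrome_comm, fibPalindrome]

lemma length_fibPalindrome (m : ℕ) : (fibPalindrome m).length + 2 = Nat.fib (m + 4) := by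
  have h := congrArg List.length (fibWord_eq_fibPalindrome_append m)
  rw [length_fibWord, List.length_append] at h
  rw [h, fibWordEnding]
  split <;> rfl

lemma fibFixedPoint_eq_of_add_eq {m p q : ℕ} (h : p + q + 3 = Nat.fib (m + 4)) :
    fibFixedPoint p = fibFixedPoint q := by
  have hlen := length_fibPalindrome m
  have eq_palindrome : ∀ r, r < (fibPalindrome m).length →
      fibFixedPoint r = ((fibPalindrome m)[r]?).getD false := fun r hr => by
    rw [fibFixedPoint_eq_getElem?_fibWord (m := m + 2) (by rw [← hlen]; omega),
      fibWord_eq_fibPalindrome_append, List.getElem?_append_left hr]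
  rw [eq_palindrome p (by omega), eq_palindrome q (by omega),
    ← List.getElem?_reverse' (i := q) (by omega), reverse_fibPalindrome]

lemma tauDigit_eq_of_add_eq {m i i' : ℕ} (hi : 2 ≤ i) (hi' : 2 ≤ i')
    (h : i + i' + 1 = 2 * Nat.fib (m + 4)) : tauDigit i = tauDigit i' := by
  rw [tauDigit, tauDigit, if_neg (by omega), if_neg (by omega)]
  exact fibFixedPoint_eq_of_add_eq (m := m) (by omega)

lemma length_of_mem_Nlist_s12 : ∀ {n : ℕ} {w : List Bool}, w ∈ Nlist n → w.length = n
  | 1, w, hw => by simp_all [Nlist]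
  | n + 2, w, hw => by
    simp only [Nlist, List.mem_append, List.mem_map, List.mem_reverse] at hw
    rcases hw with ⟨_, ⟨u, hu, rfl⟩, rfl⟩ | ⟨v, hv, rfl⟩
    · simp [length_of_mem_Nlist_s12 hu]
    · simp [length_of_mem_Nlist_s12 hv]

lemma ne_nil_of_mem_Nlist {n : ℕ} {w : List Bool} (hw : w ∈ Nlist (n + 1)) : w ≠ [] := by
  rw [← List.length_pos_iff, length_of_mem_Nlist_s12 hw]; omega

lemma tail_ne_nil_of_mem_Nlist {n : ℕ} {w : List Bool} (hw : w ∈ Nlist (n + 2)) :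
    w.tail ≠ [] := by
  rw [← List.length_pos_iff, List.length_tail, length_of_mem_Nlist_s12 hw]; omega

lemma getLast?_tail_of_mem_Nlist {n : ℕ} {w : List Bool} (hw : w ∈ Nlist (n + 2)) :
    w.tail.getLast? = w.getLast? := by
  rw [List.getLast?_tail, if_neg (by rw [length_of_mem_Nlist_s12 hw]; omega)]

lemma map_getLast?_Nlist_add_three (n : ℕ) :
    (Nlist (n + 3)).map List.getLast? =
      ((Nlist (n + 2)).map List.getLast?).reverse ++
        ((Nlist (n + 1)).map List.getLast?).reverse := by
  rw [Nlist]
  simp only [List.map_append, List.map_reverse, List.map_map]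
  congr 2 <;> refine List.map_congr_left fun w hw => ?_
  · exact (getLast?_cons_cons_of_ne_nil _ _ (tail_ne_nil_of_mem_Nlist hw)).trans
      (getLast?_tail_of_mem_Nlist hw)
  · exact getLast?_cons_cons_of_ne_nil _ _ (ne_nil_of_mem_Nlist hw)

lemma map_getLast?_Nlist : ∀ n, 2 ≤ n →
    (Nlist n).map List.getLast? =
      (List.range' (Nat.fib (n + 1)) (Nat.fib n)).map (some ∘ tauDigit)
  | 2, _ => by decide
  | 3, _ => by decide
  | n + 4, _ => by
    have ih3 : (Nlist (n + 3)).map List.getLast? =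
        (List.range' (Nat.fib (n + 4)) (Nat.fib (n + 3))).map (some ∘ tauDigit) :=
      map_getLast?_Nlist (n + 3) (by omega)
    have ih2 : (Nlist (n + 2)).map List.getLast? =
        (List.range' (Nat.fib (n + 3)) (Nat.fib (n + 2))).map (some ∘ tauDigit) :=
      map_getLast?_Nlist (n + 2) (by omega)
    have h5 : Nat.fib (n + 5) = Nat.fib (n + 3) + Nat.fib (n + 4) := Nat.fib_add_two
    have h4 : Nat.fib (n + 3) + Nat.fib (n + 2) = Nat.fib (n + 4) := by
      rw [add_comm]; exact Nat.fib_add_two.symm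
    have h3 : 2 ≤ Nat.fib (n + 3) := Nat.fib_mono (show 3 ≤ n + 3 by omega)
    have reflect : ∀ i i', 2 ≤ i → 2 ≤ i' → i + i' + 1 = 2 * Nat.fib (n + 5) →
        (some ∘ tauDigit) i = (some ∘ tauDigit) i' := fun i i' hi hi' h =>
      congrArg some (tauDigit_eq_of_add_eq (m := n + 1) hi hi' h)
    rw [map_getLast?_Nlist_add_three, ih3, ih2,
      reverse_map_range' _ (a' := Nat.fib (n + 5))
        fun k hk => reflect _ _ (by omega) (by omega) (by omega),
      reverse_map_range' _ (a' := Nat.fib (n + 5) + Nat.fib (n + 3))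
        fun k hk => reflect _ _ (by omega) (by omega) (by omega),
      ← List.map_append, List.range'_append_1, h4]

lemma dupList_append (L L' : List (List Bool)) : dupList (L ++ L') = dupList L ++ dupList L' :=
  List.flatMap_append

lemma dupList_reverse (L : List (List Bool)) : dupList L.reverse = (dupList L).reverse := by
  rw [dupList, dupList, List.flatMap_reverse]
  congr 2
  funext w
  rw [Function.comp_apply]
  split <;> rfl

lemma dupList_map (g : List Bool → List Bool) {L : List (List Bool)}
    (hg : ∀ w ∈ L, (g w).getLast? = w.getLast?) : dupList (L.map g) = (dupList L).map g := by
  rw [dupList, dupList, List.flatMap_map, List.map_flatMap]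
  refine List.flatMap_congr fun w hw => ?_
  rw [hg w hw]
  split <;> rfl

lemma dupList_Nlist : ∀ n, 1 ≤ n → dupList (Nlist n) = (Nlist (n + 1)).map List.dropLast
  | 1, _ => by decide
  | 2, _ => by decide
  | n + 3, _ => by
    rw [Nlist.eq_3 (n + 1), Nlist.eq_3 (n + 2), dupList_append, dupList_map, dupList_reverse,
      dupList_map, dupList_map, dupList_reverse, dupList_Nlist (n + 2) (by omega),
      dupList_Nlist (n + 1) (by omega)]
    · simp only [List.map_append, List.map_reverse, List.map_map]
      congr 2 <;> refine List.map_congr_left fun w hw => ?_ <;> simp only [Function.comp_apply]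
      · rw [dropLast_cons_cons_of_ne_nil _ _ (tail_ne_nil_of_mem_Nlist hw), List.tail_dropLast]
      · rw [dropLast_cons_cons_of_ne_nil _ _ (ne_nil_of_mem_Nlist hw)]
    · exact fun w hw =>
        getLast?_cons_cons_of_ne_nil _ _ (ne_nil_of_mem_Nlist (List.mem_reverse.1 hw))
    · exact fun w hw => getLast?_tail_of_mem_Nlist hw
    · intro w hw
      obtain ⟨u, hu, rfl⟩ := List.mem_map.1 (List.mem_reverse.1 hw)
      exact getLast?_cons_cons_of_ne_nil _ _ (tail_ne_nil_of_mem_Nlist hu)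

/-- For every `n ≥ 2`, the list `(h_{F (n+2)}, …, h_{F (n+3) - 1})`
obtained from `N_n = (g_{F (n+1)}, …, g_{F (n+2) - 1})` by keeping each word ending in
`1` once and repeating each word ending in `0` twice consecutively has `F (n+1)`
entries, and `g_i = h_i τ_i` for every `F (n+2) ≤ i ≤ F (n+3) - 1`; that is, this
procedure produces `N_{n+1}` from `N_n`. -/
theorem grayCode_fibonacci_substitution (n : ℕ) (hn : 2 ≤ n) :
    (dupList (Nlist n)).length = Nat.fib (n + 1) ∧
    ∀ j, j < Nat.fib (n + 1) →
      (Nlist (n + 1)).getD j [] =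
        (dupList (Nlist n)).getD j [] ++ [tauDigit (Nat.fib (n + 2) + j)] := by
  have hdup := dupList_Nlist n (by omega)
  refine ⟨by rw [hdup, List.length_map, length_Nlist], fun j hj => ?_⟩
  have hj' : j < (Nlist (n + 1)).length := by rwa [length_Nlist]
  have hlast : (Nlist (n + 1))[j].getLast? = some (tauDigit (Nat.fib (n + 2) + j)) := by
    simpa [hj', hj, List.getElem?_range', eq_comm] using
      congrArg (·[j]?) (map_getLast?_Nlist (n + 1) (by omega))
  obtain ⟨w, hw⟩ := List.getLast?_eq_some_iff.1 hlast
  rw [hdup, List.getD_eq_getElem _ _ hj', List.getD_eq_getElem _ _ (by simpa using hj'),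
    List.getElem_map, hw, List.dropLast_concat]
end

section
/- For every n ≥ 0 and any two states s and s' of the Tower of Hanoi-Fibonacci with n disks, there is a finite sequence of Fibonacci moves transforming s into s'; in other words, the directed graph on the 3^n states whose arcs are the Fibonacci moves is strongly connected. -/
/-- A `k`-Fibonacci move on states of the Tower of Hanoi-Fibonacci with `n` disks.
Disks are numbered `1,…,n`; disk `k` corresponds to index `i : Fin n` with `(i : ℕ) + 1 = k`.
Pegs are `Fin 3` (`0 = A`, `1 = B`, `2 = C`). -/
def FibMove (n k : ℕ) (s s' : Fin n → Fin 3) : Prop :=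
  1 ≤ k ∧ k ≤ n ∧
  ∃ X Y Z : Fin 3, X ≠ Y ∧ Y ≠ Z ∧ X ≠ Z ∧
    (∀ i : Fin n, (i : ℕ) + 1 = k → s i = X) ∧
    (∀ i : Fin n, (i : ℕ) + 1 < k → s i ≠ X) ∧
    (∀ i : Fin n, (i : ℕ) + 1 < k → s i = Y) ∧
    (∀ i : Fin n, ((i : ℕ) + 1 = k ∨ (i : ℕ) + 2 = k) → s' i = Z) ∧
    (∀ i : Fin n, (i : ℕ) + 1 ≠ k → (i : ℕ) + 2 ≠ k → s' i = s i)

/-- `s 0, s 1, …, s m` is a solution of length `m` of the Tower of Hanoi-Fibonacci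
with `n` disks: it starts with all disks on peg `A = 0`, ends with all disks on
peg `C = 2`, and each step is a Fibonacci move. -/
def IsSolution (n m : ℕ) (s : ℕ → (Fin n → Fin 3)) : Prop :=
  (s 0 = fun _ => 0) ∧ (s m = fun _ => 2) ∧ ∀ i < m, ∃ k, FibMove n k (s i) (s (i + 1))

/-! Induction on the number of disks. The largest disk never obstructs a move of the smaller
ones, so every sequence of moves of the first `n` disks is also one of the `n + 1` disks. To
carry the largest disk from peg `X` to peg `Z ≠ X`, first gather the other disks on the third
peg `Y`; then one `(n + 1)`-Fibonacci move puts the two largest disks on `Z`, after which the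
first `n` disks can be rearranged at will. -/

def FibStep (n : ℕ) (s s' : Fin n → Fin 3) : Prop := ∃ k, FibMove n k s s'

theorem FibMove.snoc {n k : ℕ} {s s' : Fin n → Fin 3} (h : FibMove n k s s') (x : Fin 3) :
    FibMove (n + 1) k (Fin.snoc s x) (Fin.snoc s' x) := by
  obtain ⟨hk, hkn, X, Y, Z, hXY, hYZ, hXZ, hon, hfree, hgathered, hmoved, hfixed⟩ := h
  refine ⟨hk, hkn.trans n.le_succ, X, Y, Z, hXY, hYZ, hXZ, ?_, ?_, ?_, ?_, ?_⟩ <;>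
    simp only [Fin.forall_fin_succ', Fin.snoc_castSucc, Fin.snoc_last, Fin.val_castSucc,
      Fin.val_last]
  · exact ⟨hon, by omega⟩
  · exact ⟨hfree, by omega⟩
  · exact ⟨hgathered, by omega⟩
  · exact ⟨hmoved, by omega⟩
  · exact ⟨hfixed, fun _ _ => trivial⟩

theorem fibMove_largest_disk {n : ℕ} {X Y Z : Fin 3} (hXY : X ≠ Y) (hYZ : Y ≠ Z) (hXZ : X ≠ Z) :
    FibMove (n + 1) (n + 1) (Fin.snoc (fun _ => Y) X)
      (Fin.snoc (fun i => if (i : ℕ) + 1 = n then Z else Y) Z) := by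
  refine ⟨n.succ_pos, le_rfl, X, Y, Z, hXY, hYZ, hXZ, ?_, ?_, ?_, ?_, ?_⟩ <;>
    simp only [Fin.forall_fin_succ', Fin.snoc_castSucc, Fin.snoc_last, Fin.val_castSucc,
      Fin.val_last]
  · exact ⟨fun i hi => absurd hi (by have := i.is_lt; omega), fun _ => trivial⟩
  · exact ⟨fun _ _ => hXY.symm, fun h => absurd h (lt_irrefl _)⟩
  · exact ⟨fun _ _ => trivial, fun h => absurd h (lt_irrefl _)⟩
  · exact ⟨fun i hi => if_pos (by have := i.is_lt; omega), fun _ => trivial⟩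
  · exact ⟨fun i _ hi => if_neg (by omega), fun h => absurd rfl h⟩

namespace FibStep

theorem reflTransGen_snoc {n : ℕ} {s s' : Fin n → Fin 3}
    (h : Relation.ReflTransGen (FibStep n) s s') (x : Fin 3) :
    Relation.ReflTransGen (FibStep (n + 1)) (Fin.snoc s x) (Fin.snoc s' x) :=
  Relation.ReflTransGen.lift (p := FibStep (n + 1)) (Fin.snoc · x)
    (fun _ _ ⟨k, hk⟩ => ⟨k, hk.snoc x⟩) _ _ h

theorem reflTransGen_succ {n : ℕ}
    (ih : ∀ s s' : Fin n → Fin 3, Relation.ReflTransGen (FibStep n) s s')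
    (s s' : Fin (n + 1) → Fin 3) : Relation.ReflTransGen (FibStep (n + 1)) s s' := by
  rw [← Fin.snoc_init_self s, ← Fin.snoc_init_self s']
  set X := s (Fin.last n)
  set Z := s' (Fin.last n)
  by_cases hXZ : X = Z
  · rw [hXZ]
    exact reflTransGen_snoc (ih _ _) Z
  obtain ⟨Y, hYX, hYZ⟩ : ∃ Y : Fin 3, Y ≠ X ∧ Y ≠ Z := by
    have third_peg : ∀ a b : Fin 3, ∃ c, c ≠ a ∧ c ≠ b := by decide
    exact third_peg X Z
  have gather := reflTransGen_snoc (ih (Fin.init s) fun _ => Y) X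
  have move_largest : FibStep (n + 1) _ _ := ⟨n + 1, fibMove_largest_disk hYX.symm hYZ hXZ⟩
  exact (gather.tail move_largest).trans (reflTransGen_snoc (ih _ _) Z)

end FibStep

/-- For every `n ≥ 0` and any two states `s, s'` of the Tower of
Hanoi-Fibonacci with `n` disks, there is a finite sequence of Fibonacci moves
transforming `s` into `s'`: the directed graph on the `3^n` states whose arcs are the
Fibonacci moves is strongly connected. -/
theorem hanoiFibonacci_strongly_connected (n : ℕ) (s s' : Fin n → Fin 3) :
    Relation.ReflTransGen (fun a b => ∃ k, FibMove n k a b) s s' := by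
  induction n with
  | zero => rw [Subsingleton.elim s s']
  | succ n ih => exact FibStep.reflTransGen_succ ih s s'
end
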